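/- For a weak metric f-structure (f, Q, ξ_1, …, ξ_s, η^1, …, η^s, ⟨·,·⟩) on V, the endomorphism f is skew-adjoint: ⟨fX, Y⟩ = −⟨X, fY⟩ for all X, Y ∈ V. -/

import Mathlib

open scoped RealInnerProductSpace

/-!
On `D = ⋂ ker ηⁱ` we have `f² = -Q`, so `f` is injective there; as `dim D = 2n = rank f`, `f`
maps `D` onto `range f`, whence `range f ⊆ D`, i.e. `ηⁱ ∘ f = 0`. It follows that `f ξᵢ = 0`, that
`ηʲ = ⟪·, ξⱼ⟫` (the metric identity at `Y = ξⱼ`) and that `f Q = Q f` (expand `f³` both ways).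
The metric identity at `(X, f Y)` then reads `⟪f X, -Q Y⟫ = ⟪X, f (Q Y)⟫`, and `Q` is onto.
-/

open Module LinearMap

theorem Submodule.map_eq_range_of_disjoint_ker {K V W : Type*} [DivisionRing K]
    [AddCommGroup V] [Module K V] [AddCommGroup W] [Module K W] [FiniteDimensional K V]
    (f : V →ₗ[K] W) {p : Submodule K V} (hdisj : Disjoint p (ker f))
    (hp : finrank K (range f) ≤ finrank K p) : p.map f = range f := by
  refine Submodule.eq_of_le_of_finrank_le map_le_range ?_
  rwa [← range_domRestrict, finrank_range_of_inj (injective_domRestrict_iff.mpr hdisj)]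

namespace WeakMetricFStructure

section Linear

variable {K V ι : Type*} [Field K] [AddCommGroup V] [Module K V]
  {f Q : V →ₗ[K] V} {ξ : ι → V} {η : ι → V →ₗ[K] K}

theorem mem_ker_pi_iff {x : V} : x ∈ ker (LinearMap.pi η) ↔ ∀ i, η i x = 0 := by
  simp [funext_iff]

variable [Fintype ι]

theorem disjoint_ker_pi_ker (hQ : Function.Injective Q)
    (hf2 : ∀ X, f (f X) = -(Q X) + ∑ i, η i X • ξ i) :
    Disjoint (ker (LinearMap.pi η)) (ker f) := by
  refine Submodule.disjoint_def.mpr fun x hx hfx => hQ ?_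
  rw [mem_ker] at hfx
  have h := hf2 x
  simp only [hfx, map_zero, mem_ker_pi_iff.mp hx, zero_smul, Finset.sum_const_zero, add_zero,
    zero_eq_neg] at h
  rw [h, map_zero]

theorem pi_surjective_of_dual [DecidableEq ι]
    (hηξ : ∀ i j, η i (ξ j) = if i = j then (1 : K) else 0) :
    Function.Surjective (LinearMap.pi η) := fun c =>
  ⟨∑ j, c j • ξ j, funext fun i => by simp [hηξ]⟩

theorem finrank_ker_pi_add_card [DecidableEq ι] [FiniteDimensional K V]
    (hηξ : ∀ i j, η i (ξ j) = if i = j then (1 : K) else 0) :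
    finrank K (ker (LinearMap.pi η)) + Fintype.card ι = finrank K V := by
  have h := finrank_range_add_finrank_ker (LinearMap.pi η)
  rw [range_eq_top.mpr (pi_surjective_of_dual hηξ), finrank_top,
    finrank_fintype_fun_eq_card] at h
  omega

theorem range_le_ker_pi [DecidableEq ι] [FiniteDimensional K V] (hQ : Function.Injective Q)
    (hf2 : ∀ X, f (f X) = -(Q X) + ∑ i, η i X • ξ i)
    (hηξ : ∀ i j, η i (ξ j) = if i = j then (1 : K) else 0)
    (hD : ∀ X, (∀ i, η i X = 0) → ∀ i, η i (f X) = 0)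
    (hrank : finrank K (range f) + Fintype.card ι = finrank K V) :
    range f ≤ ker (LinearMap.pi η) := by
  have hmap : (ker (LinearMap.pi η)).map f = range f :=
    Submodule.map_eq_range_of_disjoint_ker f (disjoint_ker_pi_ker hQ hf2)
      (by have := finrank_ker_pi_add_card hηξ; omega)
  rw [← hmap]
  rintro _ ⟨x, hx, rfl⟩
  exact mem_ker_pi_iff.mpr (hD x (mem_ker_pi_iff.mp hx))

theorem apply_xi_eq_zero [DecidableEq ι] (hQ : Function.Injective Q)
    (hf2 : ∀ X, f (f X) = -(Q X) + ∑ i, η i X • ξ i)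
    (hηξ : ∀ i j, η i (ξ j) = if i = j then (1 : K) else 0) (hQξ : ∀ i, Q (ξ i) = ξ i)
    (hηf : ∀ X i, η i (f X) = 0) (j : ι) : f (ξ j) = 0 := by
  refine Submodule.disjoint_def.mp (disjoint_ker_pi_ker hQ hf2) _
    (mem_ker_pi_iff.mpr (hηf (ξ j))) ?_
  simp [hf2, hηξ, hQξ]

theorem apply_Q_eq_Q_apply (hf2 : ∀ X, f (f X) = -(Q X) + ∑ i, η i X • ξ i)
    (hηf : ∀ X i, η i (f X) = 0) (hfξ : ∀ i, f (ξ i) = 0) (X : V) : f (Q X) = Q (f X) := by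
  have h := congrArg f (hf2 X)
  simp only [hf2 (f X), hηf, zero_smul, Finset.sum_const_zero, add_zero, map_add, map_neg,
    map_sum, map_smul, hfξ, smul_zero] at h
  exact neg_injective h.symm

end Linear

section Metric

variable {V ι : Type*} [NormedAddCommGroup V] [InnerProductSpace ℝ V] [Fintype ι]
  {f Q : V →ₗ[ℝ] V} {ξ : ι → V} {η : ι → V →ₗ[ℝ] ℝ}

theorem eta_eq_inner [DecidableEq ι] (hηξ : ∀ i j, η i (ξ j) = if i = j then (1 : ℝ) else 0)
    (hQξ : ∀ i, Q (ξ i) = ξ i) (hfξ : ∀ i, f (ξ i) = 0)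
    (hmetric : ∀ X Y, ⟪f X, f Y⟫ = ⟪X, Q Y⟫ - ∑ i, η i X * η i Y) (X : V) (j : ι) :
    η j X = ⟪X, ξ j⟫ := by
  have h := hmetric X (ξ j)
  simp only [hfξ, inner_zero_right, hQξ, hηξ, mul_ite, mul_one, mul_zero,
    Finset.sum_ite_eq', Finset.mem_univ, if_true] at h
  linarith

theorem inner_apply_Q_eq_neg (hf2 : ∀ X, f (f X) = -(Q X) + ∑ i, η i X • ξ i)
    (hηf : ∀ X i, η i (f X) = 0) (hηinner : ∀ X j, η j X = ⟪X, ξ j⟫)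
    (hcomm : ∀ X, f (Q X) = Q (f X))
    (hmetric : ∀ X Y, ⟪f X, f Y⟫ = ⟪X, Q Y⟫ - ∑ i, η i X * η i Y) (X Y : V) :
    ⟪f X, Q Y⟫ = -⟪X, f (Q Y)⟫ := by
  have h := hmetric X (f Y)
  simp only [hf2 Y, inner_add_right, inner_neg_right, inner_sum, real_inner_smul_right,
    ← hηinner, hηf, mul_zero, Finset.sum_const_zero, sub_zero, add_zero, ← hcomm] at h
  linarith

end Metric

end WeakMetricFStructure

open WeakMetricFStructure

theorem weak_metric_f_structure_f_skew_adjoint_general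
    {V : Type*} [NormedAddCommGroup V] [InnerProductSpace ℝ V] [FiniteDimensional ℝ V]
    (n s : ℕ)
    (hdim : Module.finrank ℝ V = 2 * n + s)
    (f Q : V →ₗ[ℝ] V) (ξ : Fin s → V) (η : Fin s → V →ₗ[ℝ] ℝ)
    (hQ : Function.Bijective Q)
    (hrank : Module.finrank ℝ (LinearMap.range f) = 2 * n)
    (hf2 : ∀ X, f (f X) = -(Q X) + ∑ i, η i X • ξ i)
    (hηξ : ∀ i j, η i (ξ j) = if i = j then (1 : ℝ) else 0)
    (hQξ : ∀ i, Q (ξ i) = ξ i)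
    (hD : ∀ X, (∀ i, η i X = 0) → ∀ i, η i (f X) = 0)
    (hmetric : ∀ X Y, ⟪f X, f Y⟫ = ⟪X, Q Y⟫ - ∑ i, η i X * η i Y) :
    ∀ X Y, ⟪f X, Y⟫ = -⟪X, f Y⟫ := by
  have hηf : ∀ X i, η i (f X) = 0 := fun X =>
    mem_ker_pi_iff.mp (range_le_ker_pi hQ.1 hf2 hηξ hD (by simp [hrank, hdim]) ⟨X, rfl⟩)
  have hfξ := apply_xi_eq_zero hQ.1 hf2 hηξ hQξ hηf
  intro X Z
  obtain ⟨Y, rfl⟩ := hQ.2 Z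
  exact inner_apply_Q_eq_neg hf2 hηf (eta_eq_inner hηξ hQξ hfξ hmetric)
    (apply_Q_eq_Q_apply hf2 hηf hfξ) hmetric X Y

/-- For a weak metric f-structure `(f, Q, ξ_i, η^i, g)` on a real inner product space `V`
of dimension `2n+s`, the endomorphism `f` is skew-adjoint. -/
theorem weak_metric_f_structure_f_skew_adjoint
    {V : Type*} [NormedAddCommGroup V] [InnerProductSpace ℝ V] [FiniteDimensional ℝ V]
    (n s : ℕ) (hn : 1 ≤ n) (hs : 1 ≤ s)
    (hdim : Module.finrank ℝ V = 2 * n + s)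
    (f Q : V →ₗ[ℝ] V) (ξ : Fin s → V) (η : Fin s → V →ₗ[ℝ] ℝ)
    (hQ : Function.Bijective Q)
    (hrank : Module.finrank ℝ (LinearMap.range f) = 2 * n)
    (hf2 : ∀ X, f (f X) = -(Q X) + ∑ i, η i X • ξ i)
    (hηξ : ∀ i j, η i (ξ j) = if i = j then (1 : ℝ) else 0)
    (hQξ : ∀ i, Q (ξ i) = ξ i)
    (hD : ∀ X, (∀ i, η i X = 0) → ∀ i, η i (f X) = 0)
    (hmetric : ∀ X Y, ⟪f X, f Y⟫ = ⟪X, Q Y⟫ - ∑ i, η i X * η i Y) :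
    ∀ X Y, ⟪f X, Y⟫ = -⟪X, f Y⟫ :=
  weak_metric_f_structure_f_skew_adjoint_general n s hdim f Q ξ η hQ hrank hf2 hηξ hQξ hD hmetric
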